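/- The balancing stage does not alter the number of tours and still covers every trip exactly once: let t 1, …, t K be pairwise disjoint lists of trips, each without repeated entries and of length at least 2, and let σ be any permutation of {1, …, K}. Define the new tour u k as the stripped tour t k (t k with its last entry removed) followed by the last entry of t (σ k). Then the K new tours u 1, …, u K are nonempty, pairwise disjoint, and the set of trips appearing in u 1, …, u K equals the set of trips appearing in t 1, …, t K. -/

import Mathlib

/-!
A trip of a new tour is either a non-last trip of the same old tour or the last trip of
tour `σ k`. A last trip lies in no stripped tour (its own by duplicate-freeness, the others by
disjointness), and the last trips of distinct tours differ, so injectivity of `σ` gives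
disjointness; surjectivity of `σ` puts every last trip back into some new tour.
-/

open Function

theorem List.Nodup.getLast_notMem_dropLast {ι : Type*} {l : List ι} (hl : l.Nodup)
    (hne : l ≠ []) : l.getLast hne ∉ l.dropLast :=
  fun h => hl.rel_dropLast_getLast h rfl

section Balancing

variable {ι κ : Type*} {t : κ → List ι}

def balance (t : κ → List ι) (ht : ∀ k, t k ≠ []) (σ : Equiv.Perm κ) (k : κ) : List ι :=
  (t k).dropLast ++ [(t (σ k)).getLast (ht (σ k))]

variable {ht : ∀ k, t k ≠ []} {σ : Equiv.Perm κ}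

theorem balance_ne_nil (k : κ) : balance t ht σ k ≠ [] := by
  simp [balance]

theorem mem_balance {x : ι} {k : κ} :
    x ∈ balance t ht σ k ↔ x ∈ (t k).dropLast ∨ x = (t (σ k)).getLast (ht (σ k)) := by
  simp [balance]

theorem exists_mem_balance_iff {x : ι} : (∃ k, x ∈ balance t ht σ k) ↔ ∃ k, x ∈ t k := by
  constructor
  · rintro ⟨k, hx⟩
    rcases mem_balance.1 hx with hx | rfl
    · exact ⟨k, List.mem_of_mem_dropLast hx⟩
    · exact ⟨σ k, List.getLast_mem _⟩
  · rintro ⟨k, hx⟩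
    rw [← List.dropLast_append_getLast (ht k), List.mem_append, List.mem_singleton] at hx
    rcases hx with hx | rfl
    · exact ⟨k, mem_balance.2 (Or.inl hx)⟩
    · exact ⟨σ.symm k, mem_balance.2 (Or.inr (by rw [σ.apply_symm_apply]))⟩

theorem getLast_notMem_dropLast_of_pairwise_disjoint (hdisj : Pairwise (List.Disjoint on t))
    (hnodup : ∀ k, (t k).Nodup) (j k : κ) :
    (t j).getLast (ht j) ∉ (t k).dropLast := by
  obtain rfl | hjk := eq_or_ne j k
  · exact (hnodup j).getLast_notMem_dropLast (ht j)
  · exact fun h => hdisj hjk (List.getLast_mem _) (List.mem_of_mem_dropLast h)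

theorem eq_of_getLast_eq_of_pairwise_disjoint (hdisj : Pairwise (List.Disjoint on t)) {j k : κ}
    (h : (t j).getLast (ht j) = (t k).getLast (ht k)) : j = k := by
  by_contra hjk
  exact hdisj hjk (List.getLast_mem _) (h ▸ List.getLast_mem (ht k))

theorem pairwise_disjoint_balance (hdisj : Pairwise (List.Disjoint on t))
    (hnodup : ∀ k, (t k).Nodup) :
    Pairwise (List.Disjoint on balance t ht σ) := by
  intro k k' hkk' x hx hx'
  rcases mem_balance.1 hx with hx | rfl <;> rcases mem_balance.1 hx' with hx' | hx'
  · exact hdisj hkk' (List.mem_of_mem_dropLast hx) (List.mem_of_mem_dropLast hx')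
  · exact getLast_notMem_dropLast_of_pairwise_disjoint hdisj hnodup (σ k') k (hx' ▸ hx)
  · exact getLast_notMem_dropLast_of_pairwise_disjoint hdisj hnodup (σ k) k' hx'
  · exact hkk' (σ.injective (eq_of_getLast_eq_of_pairwise_disjoint hdisj hx'))

end Balancing

/-- The balancing stage does not alter the number of tours and still covers
every trip exactly once: given pairwise disjoint duplicate-free tours of length
at least 2 and a permutation `σ`, the new tours (stripped tour `t k` followed by
the last entry of `t (σ k)`) are nonempty, pairwise disjoint, and cover exactly
the same set of trips. -/
theorem balancing_preserves_cover {ι : Type*} {K : ℕ} (t : Fin K → List ι)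
    (hdisj : ∀ k k' : Fin K, k ≠ k' → (t k).Disjoint (t k'))
    (hnodup : ∀ k, (t k).Nodup)
    (hlen : ∀ k, 2 ≤ (t k).length)
    (σ : Equiv.Perm (Fin K))
    (u : Fin K → List ι)
    (hu : ∀ k, u k = (t k).dropLast ++
      [(t (σ k)).getLast (by have := hlen (σ k); simp only [← List.length_pos_iff]; omega)]) :
    (∀ k, u k ≠ []) ∧
      (∀ k k' : Fin K, k ≠ k' → (u k).Disjoint (u k')) ∧
      {x : ι | ∃ k, x ∈ u k} = {x : ι | ∃ k, x ∈ t k} := by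
  have ht : ∀ k, t k ≠ [] := fun k => List.ne_nil_of_length_pos (by linarith [hlen k])
  obtain rfl : u = balance t ht σ := funext hu
  exact ⟨balance_ne_nil, fun _ _ hkk' => pairwise_disjoint_balance (fun k k' => hdisj k k') hnodup hkk',
    Set.ext fun _ => exists_mem_balance_iff⟩
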